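/- arXiv:1009.0133 — 3 statements merged into one kernel-verified Lean document; each statement's English description precedes it below -/
import Mathlib

section
/- Let (X,d) be a metric space and let ν be a finite Borel measure on X. Let α > 0 and suppose the α-energy of ν is finite, i.e. C_α(ν) = ∬_{X×X} d(x,y)^{-α} dν(x) dν(y) < ∞. Then for ν-almost every x ∈ X, the normalized ball mass ν(closedBall(x,r)) / r^α tends to 0 as r → 0⁺. -/
open MeasureTheory Metric Filter
open scoped ENNReal NNReal

/-- If a finite Borel measure `ν` on a metric space has finite `α`-energy
`C_α(ν) = ∬ d(x,y)^{-α} dν(x) dν(y) < ∞` (with the convention `0^{-α} = ∞`),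
then for `ν`-almost every `x`, `ν(closedBall x r) / r^α → 0` as `r → 0⁺`. -/
theorem energy_finite_ball_ratio_tendsto_zero
    {X : Type*} [MetricSpace X] [MeasurableSpace X] [BorelSpace X]
    (ν : Measure X) [IsFiniteMeasure ν] (α : ℝ) (hα : 0 < α)
    (hE : ∫⁻ x, ∫⁻ y, (ENNReal.ofReal (dist x y)) ^ (-α) ∂ν ∂ν ≠ ⊤) :
    ∀ᵐ x ∂ν, Tendsto (fun r : ℝ => ν (closedBall x r) / ENNReal.ofReal (r ^ α))
      (nhdsWithin 0 (Set.Ioi 0)) (nhds 0) := by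
  set F : X → ℝ≥0∞ := fun x => ∫⁻ y, (ENNReal.ofReal (dist x y)) ^ (-α) ∂ν with hF
  -- measurability of the kernel in the second variable
  have Kymeas : ∀ x : X, Measurable fun y => (ENNReal.ofReal (dist x y)) ^ (-α) := fun x =>
    (ENNReal.continuous_rpow_const.comp
      (ENNReal.continuous_ofReal.comp (continuous_const.dist continuous_id))).measurable
  -- F is lower semicontinuous, hence measurable
  have Flsc : LowerSemicontinuous F := by
    rw [lowerSemicontinuous_iff_le_liminf]
    intro x
    by_contra h
    push_neg at h
    obtain ⟨c, hc1, hc2⟩ := exists_between h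
    have hfreq : ∃ᶠ x' in nhds x, F x' < c := frequently_lt_of_liminf_lt (by isBoundedDefault) hc1
    obtain ⟨u, hu, hult⟩ := exists_seq_forall_of_frequently hfreq
    have hlim : ∀ y : X, Tendsto (fun n => (ENNReal.ofReal (dist (u n) y)) ^ (-α)) atTop
        (nhds ((ENNReal.ofReal (dist x y)) ^ (-α))) := fun y => by
      exact ((ENNReal.continuous_rpow_const.comp
        (ENNReal.continuous_ofReal.comp (continuous_id.dist continuous_const))).tendsto x).comp hu
    have key : F x ≤ liminf (fun n => F (u n)) atTop := by
      calc F x = ∫⁻ y, liminf (fun n => (ENNReal.ofReal (dist (u n) y)) ^ (-α)) atTop ∂ν := by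
            refine lintegral_congr fun y => ((hlim y).liminf_eq).symm
        _ ≤ liminf (fun n => F (u n)) atTop :=
            lintegral_liminf_le fun n => Kymeas (u n)
    have : liminf (fun n => F (u n)) atTop ≤ c :=
      liminf_le_of_frequently_le (Frequently.of_forall fun n => (hult n).le)
    exact absurd (key.trans this) (not_le.mpr hc2)
  have Fmeas : Measurable F := Flsc.measurable
  have hae : ∀ᵐ x ∂ν, F x < ⊤ := ae_lt_top Fmeas hE
  filter_upwards [hae] with x hx
  set K : X → ℝ≥0∞ := fun y => (ENNReal.ofReal (dist x y)) ^ (-α) with hKdef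
  set μ' : Measure X := ν.withDensity K with hμ'
  have hμ'app : ∀ s : Set X, MeasurableSet s → μ' s = ∫⁻ y in s, K y ∂ν := fun s hs =>
    withDensity_apply K hs
  have hμ'univ : μ' Set.univ ≠ ⊤ := by
    rw [hμ'app _ MeasurableSet.univ, Measure.restrict_univ]
    exact hx.ne
  have hKx : K x = ⊤ := by
    simp [hKdef, ENNReal.rpow_neg, ENNReal.rpow_eq_zero_iff, hα]
  have hsing : μ' {x} = ⊤ * ν {x} := by
    rw [hμ'app _ (measurableSet_singleton x), lintegral_singleton, hKx]
  have hνx : μ' {x} = 0 := by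
    by_cases h0 : ν {x} = 0
    · rw [hsing, h0, mul_zero]
    · exfalso
      apply hμ'univ
      have : μ' {x} = ⊤ := by rw [hsing, ENNReal.top_mul h0]
      exact top_le_iff.mp (this ▸ measure_mono (Set.subset_univ _))
  have hiInter : ⋂ n : ℕ, closedBall x (1 / (n + 1)) = {x} := by
    ext y
    simp only [Set.mem_iInter, mem_closedBall, Set.mem_singleton_iff]
    constructor
    · intro h
      by_contra hne
      have hd : 0 < dist y x := dist_pos.mpr hne
      obtain ⟨n, hn⟩ := exists_nat_one_div_lt hd
      exact absurd (h n) (not_le.mpr hn)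
    · rintro rfl; intro n; rw [dist_self]; positivity
  have htend : Tendsto (fun n : ℕ => μ' (closedBall x (1 / (n + 1)))) atTop (nhds 0) := by
    have := tendsto_measure_iInter_atTop (μ := μ')
      (s := fun n : ℕ => closedBall x (1 / (n + 1)))
      (fun n => measurableSet_closedBall.nullMeasurableSet)
      (fun m n hmn => closedBall_subset_closedBall (by
        apply one_div_le_one_div_of_le
        · positivity
        · have : (m : ℝ) ≤ n := Nat.cast_le.mpr hmn
          linarith))
      ⟨0, ne_top_of_le_ne_top hμ'univ (measure_mono (Set.subset_univ _))⟩
    rwa [hiInter, hνx] at this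
  have key : ∀ r : ℝ, 0 < r →
      ν (closedBall x r) / ENNReal.ofReal (r ^ α) ≤ μ' (closedBall x r) := by
    intro r hr
    rw [hμ'app _ measurableSet_closedBall]
    have hle : ∀ y ∈ closedBall x r, (ENNReal.ofReal (r ^ α))⁻¹ ≤ K y := by
      intro y hy
      have hd : ENNReal.ofReal (dist x y) ≤ ENNReal.ofReal r :=
        ENNReal.ofReal_le_ofReal (by rw [dist_comm]; exact hy)
      have h1 : (ENNReal.ofReal r) ^ (-α) ≤ K y := by
        rw [hKdef]
        simp only [ENNReal.rpow_neg]
        exact ENNReal.inv_le_inv.mpr (ENNReal.rpow_le_rpow hd hα.le)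
      refine le_trans (le_of_eq ?_) h1
      rw [ENNReal.rpow_neg, ← ENNReal.ofReal_rpow_of_pos hr]
    calc ν (closedBall x r) / ENNReal.ofReal (r ^ α)
        = ∫⁻ _ in closedBall x r, (ENNReal.ofReal (r ^ α))⁻¹ ∂ν := by
          rw [setLIntegral_const, div_eq_mul_inv, mul_comm]
      _ ≤ ∫⁻ y in closedBall x r, K y ∂ν := setLIntegral_mono (Kymeas x) hle
  rw [ENNReal.tendsto_nhds_zero]
  intro ε hε
  rcases (ENNReal.tendsto_nhds_zero.mp htend ε hε).exists with ⟨n, hn⟩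
  have hδ : (0:ℝ) < 1 / (n + 1) := by positivity
  filter_upwards [Ioc_mem_nhdsGT_of_mem ⟨le_refl (0:ℝ), hδ⟩] with r hr
  calc ν (closedBall x r) / ENNReal.ofReal (r ^ α)
      ≤ μ' (closedBall x r) := key r hr.1
    _ ≤ μ' (closedBall x (1 / (n + 1))) := measure_mono (closedBall_subset_closedBall hr.2)
    _ ≤ ε := hn
end

section
/- Let (X,d) be a compact metric space, ν a finite Borel measure on X, and α > 0 with finite α-energy C_α(ν) = ∬_{X×X} d(x,y)^{-α} dν(x) dν(y) < ∞. Then for every β with 0 < β < α and every ε > 0 there exist a compact set K ⊆ X with ν(X \ K) ≤ ε and a constant D > 0 such that ν(closedBall(x,r) ∩ K) ≤ D·r^β for every x ∈ X and every r > 0. (In the paper's terminology: C_α(ν) < ∞ implies ν belongs to the class R_α^- = ∩_{β<α} R_β.) -/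
open MeasureTheory Metric Filter ENNReal NNReal

/-- On a compact metric space, a finite Borel measure `ν` with finite `α`-energy
`C_α(ν) = ∬ d(x,y)^{-α} dν(x) dν(y) < ∞` belongs to the class `R_α⁻`: for every
`0 < β < α` and every `ε > 0` there are a compact set `K` with `ν(X \ K) ≤ ε` and a
constant `D > 0` such that `ν(closedBall(x,r) ∩ K) ≤ D·r^β` for all `x` and `r > 0`. -/
theorem energy_finite_mem_R_alpha_minus
    {X : Type*} [MetricSpace X] [CompactSpace X] [MeasurableSpace X] [BorelSpace X]
    (ν : Measure X) [IsFiniteMeasure ν] (α : ℝ) (hα : 0 < α)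
    (hE : ∫⁻ x, ∫⁻ y, (ENNReal.ofReal (dist x y)) ^ (-α) ∂ν ∂ν ≠ ⊤) :
    ∀ β : ℝ, 0 < β → β < α → ∀ ε : ℝ, 0 < ε →
      ∃ K : Set X, IsCompact K ∧ ν Kᶜ ≤ ENNReal.ofReal ε ∧
        ∃ D : ℝ, 0 < D ∧ ∀ x : X, ∀ r : ℝ, 0 < r →
          ν (closedBall x r ∩ K) ≤ ENNReal.ofReal (D * r ^ β) := by
  intro β hβ hβα ε hε
  set f : X → ℝ≥0∞ := fun x => ∫⁻ y, (ENNReal.ofReal (dist x y)) ^ (-α) ∂ν with hf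
  have hker : Measurable fun p : X × X => (ENNReal.ofReal (dist p.1 p.2)) ^ (-α) :=
    (measurable_dist.ennreal_ofReal).pow_const _
  have hfm : Measurable f := Measurable.lintegral_prod_right hker
  -- choose n with ν {x | n ≤ f x} ≤ ε/2
  set I := ∫⁻ x, f x ∂ν with hI
  have hI' : I ≠ ⊤ := hE
  have hε2 : (0:ℝ≥0∞) < ENNReal.ofReal (ε/2) := by
    simp [ENNReal.ofReal_pos]; linarith
  obtain ⟨n, hn⟩ := ENNReal.exists_nat_gt (ENNReal.div_lt_top hI' hε2.ne').ne
  have hn1 : 1 ≤ n + 1 := Nat.le_add_left 1 n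
  set N : ℕ := n + 1 with hN
  have hNpos : (0:ℝ≥0∞) < N := by exact_mod_cast Nat.succ_pos n
  have hmarkov : ν {x | (N:ℝ≥0∞) ≤ f x} ≤ ENNReal.ofReal (ε/2) := by
    refine (meas_ge_le_lintegral_div hfm.aemeasurable hNpos.ne'
      (by simp [hN])).trans ?_
    rw [ENNReal.div_le_iff hNpos.ne' (by simp [hN])]
    calc I ≤ (I / ENNReal.ofReal (ε/2)) * ENNReal.ofReal (ε/2) := by
            rw [ENNReal.div_mul_cancel hε2.ne' ENNReal.ofReal_ne_top]
      _ ≤ (N:ℝ≥0∞) * ENNReal.ofReal (ε/2) := by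
            gcongr
            exact le_trans hn.le (by exact_mod_cast Nat.le_succ n)
      _ = ENNReal.ofReal (ε/2) * N := mul_comm _ _
  set A : Set X := {x | f x < (N:ℝ≥0∞)} with hA
  have hAm : MeasurableSet A := measurableSet_lt hfm measurable_const
  obtain ⟨F, hFA, hFc, hFν⟩ := hAm.exists_isClosed_diff_lt (measure_ne_top ν A)
    (ε := ENNReal.ofReal (ε/2)) hε2.ne'
  refine ⟨F, hFc.isCompact, ?_, ?_⟩
  · have : ν Fᶜ ≤ ν (A \ F) + ν Aᶜ := by
      refine (measure_mono ?_).trans (measure_union_le _ _)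
      intro x hx
      by_cases h : x ∈ A
      · exact Or.inl ⟨h, hx⟩
      · exact Or.inr h
    refine this.trans ?_
    have hAc : ν Aᶜ ≤ ENNReal.ofReal (ε/2) := by
      refine le_trans (measure_mono ?_) hmarkov
      intro x hx
      simpa [hA, not_lt] using hx
    calc ν (A \ F) + ν Aᶜ ≤ ENNReal.ofReal (ε/2) + ENNReal.ofReal (ε/2) :=
          add_le_add hFν.le hAc
      _ = ENNReal.ofReal ε := by
          rw [← ENNReal.ofReal_add (by linarith) (by linarith)]; ring_nf
  · refine ⟨(N:ℝ) * 2 ^ α + (ν Set.univ).toReal + 1, by positivity, ?_⟩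
    intro x r hr
    by_cases hr1 : r ≤ 1
    · by_cases hne : (closedBall x r ∩ F).Nonempty
      · obtain ⟨y, hyB, hyF⟩ := hne
        have hyA : f y < (N:ℝ≥0∞) := hFA hyF
        have hsub : closedBall x r ∩ F ⊆ closedBall y (2 * r) := by
          intro z ⟨hz, _⟩
          rw [mem_closedBall] at *
          have := dist_triangle z x y
          rw [dist_comm x y] at this
          linarith [this, hz, hyB]
        have hlow : (ENNReal.ofReal (2 * r)) ^ (-α) * ν (closedBall y (2 * r)) ≤ f y := by
          calc (ENNReal.ofReal (2 * r)) ^ (-α) * ν (closedBall y (2 * r))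
              = ∫⁻ z in closedBall y (2 * r), (ENNReal.ofReal (2 * r)) ^ (-α) ∂ν := by
                rw [setLIntegral_const, mul_comm]
            _ ≤ ∫⁻ z in closedBall y (2 * r), (ENNReal.ofReal (dist y z)) ^ (-α) ∂ν := by
                refine setLIntegral_mono
                  ((hker.comp (measurable_const.prodMk measurable_id)) :) ?_
                intro z hz
                rw [ENNReal.rpow_neg, ENNReal.rpow_neg]
                refine ENNReal.inv_le_inv.2 ?_
                exact ENNReal.rpow_le_rpow (ENNReal.ofReal_le_ofReal (by rw [dist_comm]; exact hz)) hα.le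
            _ ≤ ∫⁻ z, (ENNReal.ofReal (dist y z)) ^ (-α) ∂ν :=
                setLIntegral_le_lintegral _ _
        have h2r : (0:ℝ) < 2 * r := by linarith
        have hc0 : (0:ℝ≥0∞) < (ENNReal.ofReal (2 * r)) ^ (-α) :=
          ENNReal.rpow_pos (ENNReal.ofReal_pos.2 h2r) ENNReal.ofReal_ne_top
        have hcinv : ((ENNReal.ofReal (2 * r)) ^ (-α))⁻¹ = ENNReal.ofReal ((2*r) ^ α) := by
          rw [ENNReal.rpow_neg, inv_inv, ENNReal.ofReal_rpow_of_pos h2r]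
        have hcT : (ENNReal.ofReal (2 * r)) ^ (-α) ≠ ⊤ := by
          rw [ENNReal.rpow_neg]
          exact ENNReal.inv_ne_top.2 (ENNReal.rpow_pos (ENNReal.ofReal_pos.2 h2r)
            ENNReal.ofReal_ne_top).ne'
        have hball : ν (closedBall y (2 * r)) ≤ ENNReal.ofReal ((N:ℝ) * (2*r) ^ α) := by
          have h1 : ν (closedBall y (2 * r)) ≤ (N:ℝ≥0∞) / (ENNReal.ofReal (2 * r)) ^ (-α) := by
            rw [ENNReal.le_div_iff_mul_le (Or.inl hc0.ne') (Or.inl hcT), mul_comm]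
            exact hlow.trans hyA.le
          refine h1.trans ?_
          rw [div_eq_mul_inv, hcinv, ENNReal.ofReal_mul (by positivity)]
          simp
        refine le_trans (measure_mono hsub) (hball.trans (ENNReal.ofReal_le_ofReal ?_))
        have hrw : (2*r) ^ α = 2 ^ α * r ^ α := Real.mul_rpow (by norm_num) hr.le
        have hle : r ^ α ≤ r ^ β := Real.rpow_le_rpow_of_exponent_ge hr hr1 hβα.le
        have h2 : (N:ℝ) * (2*r) ^ α ≤ ((N:ℝ) * 2 ^ α) * r ^ β := by
          rw [hrw]
          calc (N:ℝ) * (2 ^ α * r ^ α) = ((N:ℝ) * 2 ^ α) * r ^ α := by ring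
            _ ≤ ((N:ℝ) * 2 ^ α) * r ^ β :=
                mul_le_mul_of_nonneg_left hle (by positivity)
        refine h2.trans (mul_le_mul_of_nonneg_right ?_ (by positivity))
        nlinarith [(ν Set.univ).toReal_nonneg]
      · rw [Set.not_nonempty_iff_eq_empty] at hne
        simp [hne]
    · push_neg at hr1
      have hrβ : (1:ℝ) ≤ r ^ β := Real.one_le_rpow hr1.le hβ.le
      calc ν (closedBall x r ∩ F) ≤ ν Set.univ := measure_mono (Set.subset_univ _)
        _ = ENNReal.ofReal (ν Set.univ).toReal := (ENNReal.ofReal_toReal (measure_ne_top ν _)).symm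
        _ ≤ ENNReal.ofReal (((N:ℝ) * 2 ^ α + (ν Set.univ).toReal + 1) * r ^ β) := by
            refine ENNReal.ofReal_le_ofReal ?_
            have hNr : (0:ℝ) ≤ (N:ℝ) := Nat.cast_nonneg N
            refine le_trans ?_ (le_mul_of_one_le_right ?_ hrβ)
            · nlinarith [Real.rpow_pos_of_pos (show (0:ℝ) < 2 by norm_num) α]
            · positivity
end

section
/- Let (Ω, F, P) be a probability space, m ≥ 1, and let κ assign to each ω ∈ Ω a Borel measure κ_ω on ℝ^m such that for every open ball B = B(q,r) with rational center q and positive rational radius r: (i) the map ω ↦ κ_ω(B) is measurable; (ii) P({ω : κ_ω(B) > 0}) ∈ {0,1}; and (iii) ∫_Ω κ_ω(B) dP(ω) = λ(B), where λ is Lebesgue measure on ℝ^m. Then for P-almost every ω, the measure κ_ω has full support: every nonempty open subset of ℝ^m has positive κ_ω-measure (and consequently every Borel set of zero κ_ω-measure has dense complement). -/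
/-!
Each event `{κ_ω(B) > 0}` for a rational ball `B` has probability `0` or `1`, and probability `0`
would give `E[κ_ω(B)] = 0 < λ(B)`; so it has probability `1`. Intersecting these countably many
events, almost surely `κ_ω` charges every rational ball, and every nonempty open set contains one.
-/

open MeasureTheory Metric

/-- The point of `ℝ^m` with rational coordinates `q`. -/
noncomputable def ratCenter (m : ℕ) (q : Fin m → ℚ) : EuclideanSpace ℝ (Fin m) :=
  WithLp.toLp 2 (fun i => (q i : ℝ))

open scoped ENNReal

theorem ae_pos_of_zero_one_of_lintegral_ne_zero {Ω : Type*} [MeasurableSpace Ω]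
    {P : Measure Ω} [IsProbabilityMeasure P] {f : Ω → ℝ≥0∞} (hf : Measurable f)
    (h01 : P {ω | 0 < f ω} = 0 ∨ P {ω | 0 < f ω} = 1) (hint : ∫⁻ ω, f ω ∂P ≠ 0) :
    ∀ᵐ ω ∂P, 0 < f ω := by
  have hsupp : Function.support f = {ω | 0 < f ω} := by
    ext ω; simp [pos_iff_ne_zero]
  rcases h01 with h0 | h1
  · rw [← pos_iff_ne_zero, lintegral_pos_iff_support hf, hsupp, h0] at hint
    exact (lt_irrefl 0 hint).elim
  · rwa [ae_iff_measure_eq (measurableSet_lt measurable_const hf).nullMeasurableSet,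
      measure_univ]

theorem denseRange_ratCenter (m : ℕ) : DenseRange (ratCenter m) :=
  (WithLp.equiv 2 (Fin m → ℝ)).symm.surjective.denseRange.comp
    (DenseRange.piMap fun _ => Rat.denseRange_cast) (PiLp.continuous_toLp 2 _)

theorem exists_rat_ball_subset_of_denseRange {X ι : Type*} [PseudoMetricSpace X] {c : ι → X}
    (hc : DenseRange c) {U : Set X} (hU : IsOpen U) (hne : U.Nonempty) :
    ∃ i, ∃ r : ℚ, 0 < r ∧ ball (c i) r ⊆ U := by
  obtain ⟨x, hx⟩ := hne
  obtain ⟨ε, hε, hxU⟩ := Metric.isOpen_iff.1 hU x hx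
  obtain ⟨r, hr0, hrε⟩ := exists_rat_btwn (half_pos hε)
  obtain ⟨i, hi⟩ := hc.exists_dist_lt x (by exact_mod_cast hr0 : (0 : ℝ) < r)
  refine ⟨i, r, by exact_mod_cast hr0, (ball_subset_ball' ?_).trans hxU⟩
  rw [dist_comm]; linarith

theorem isOpenPosMeasure_of_ratCenter_ball_pos {m : ℕ} {μ : Measure (EuclideanSpace ℝ (Fin m))}
    (h : ∀ (q : Fin m → ℚ) (r : ℚ), 0 < r → 0 < μ (ball (ratCenter m q) r)) :
    μ.IsOpenPosMeasure where
  open_pos U hU hne := by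
    obtain ⟨q, r, hr, hsub⟩ := exists_rat_ball_subset_of_denseRange (denseRange_ratCenter m) hU hne
    exact ((h q r hr).trans_le (measure_mono hsub)).ne'

theorem ae_full_support_of_zero_one_law_general
    {m : ℕ}
    {Ω : Type*} [MeasurableSpace Ω] (P : Measure Ω) [IsProbabilityMeasure P]
    (κ : Ω → Measure (EuclideanSpace ℝ (Fin m)))
    (hmeas : ∀ (q : Fin m → ℚ) (r : ℚ), 0 < r →
      Measurable fun ω => κ ω (ball (ratCenter m q) (r : ℝ)))
    (h01 : ∀ (q : Fin m → ℚ) (r : ℚ), 0 < r →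
      P {ω | 0 < κ ω (ball (ratCenter m q) (r : ℝ))} = 0 ∨
      P {ω | 0 < κ ω (ball (ratCenter m q) (r : ℝ))} = 1)
    (hmean : ∀ (q : Fin m → ℚ) (r : ℚ), 0 < r →
      ∫⁻ ω, κ ω (ball (ratCenter m q) (r : ℝ)) ∂P
        = volume (ball (ratCenter m q) (r : ℝ))) :
    ∀ᵐ ω ∂P,
      (∀ U : Set (EuclideanSpace ℝ (Fin m)), IsOpen U → U.Nonempty → 0 < κ ω U) ∧
      (∀ A : Set (EuclideanSpace ℝ (Fin m)), MeasurableSet A → κ ω A = 0 → Dense Aᶜ) := by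
  have hball : ∀ᵐ ω ∂P, ∀ (q : Fin m → ℚ) (r : ℚ), 0 < r →
      0 < κ ω (ball (ratCenter m q) (r : ℝ)) := by
    refine ae_all_iff.2 fun q => ae_all_iff.2 fun r =>
      Filter.eventually_imp_distrib_left.2 fun hr => ?_
    refine ae_pos_of_zero_one_of_lintegral_ne_zero (hmeas q r hr) (h01 q r hr) ?_
    rw [hmean q r hr]
    exact (measure_ball_pos volume _ (by exact_mod_cast hr)).ne'
  filter_upwards [hball] with ω hω
  have := isOpenPosMeasure_of_ratCenter_ball_pos hω
  exact ⟨fun U hU hne => hU.measure_pos _ hne,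
    fun A _ hA => interior_eq_empty_iff_dense_compl.1 (Measure.interior_eq_empty_of_null hA)⟩

/-- Paper's Proposition 2.2 (abstract form). Let `κ` be a random Borel measure on `ℝ^m`
(`m ≥ 1`) such that, for every open ball `B` with rational center and positive rational
radius: (i) `ω ↦ κ_ω(B)` is measurable; (ii) the event `{κ_ω(B) > 0}` has probability
`0` or `1` (0–1 law); (iii) `E[κ_ω(B)]` equals the Lebesgue measure of `B` (uniform
integrability of the defining martingale). Then almost surely `κ_ω` has full support:
every nonempty open set has positive measure, and consequently every Borel set of zero
`κ_ω`-measure has dense complement. -/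
theorem ae_full_support_of_zero_one_law
    {m : ℕ} (hm : 1 ≤ m)
    {Ω : Type*} [MeasurableSpace Ω] (P : Measure Ω) [IsProbabilityMeasure P]
    (κ : Ω → Measure (EuclideanSpace ℝ (Fin m)))
    (hmeas : ∀ (q : Fin m → ℚ) (r : ℚ), 0 < r →
      Measurable fun ω => κ ω (ball (ratCenter m q) (r : ℝ)))
    (h01 : ∀ (q : Fin m → ℚ) (r : ℚ), 0 < r →
      P {ω | 0 < κ ω (ball (ratCenter m q) (r : ℝ))} = 0 ∨
      P {ω | 0 < κ ω (ball (ratCenter m q) (r : ℝ))} = 1)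
    (hmean : ∀ (q : Fin m → ℚ) (r : ℚ), 0 < r →
      ∫⁻ ω, κ ω (ball (ratCenter m q) (r : ℝ)) ∂P
        = volume (ball (ratCenter m q) (r : ℝ))) :
    ∀ᵐ ω ∂P,
      (∀ U : Set (EuclideanSpace ℝ (Fin m)), IsOpen U → U.Nonempty → 0 < κ ω U) ∧
      (∀ A : Set (EuclideanSpace ℝ (Fin m)), MeasurableSet A → κ ω A = 0 → Dense Aᶜ) :=
  ae_full_support_of_zero_one_law_general P κ hmeas h01 hmean
end
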